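/- Let f be the standard normal density and Q its tail function. For all real x: x·f(x)·Q(x) + Q(x)² − f(x)² > 0. -/

import Mathlib

open Real MeasureTheory Set

noncomputable def stdNormalPdf (x : ℝ) : ℝ := (Real.sqrt (2 * Real.pi))⁻¹ * Real.exp (-x ^ 2 / 2)

noncomputable def gaussQ (x : ℝ) : ℝ := ∫ t in Set.Ici x, stdNormalPdf t

noncomputable def gaussPhi (x : ℝ) : ℝ := ∫ t in Set.Iic x, stdNormalPdf t

/-! With `g = x f Q + Q² - f²`, the identities `f' = -x f` and `Q' = -f` give
`g' = -f ((1 + x²) Q - x f)`, which is negative by the lower Mills-ratio bound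
`x f / (1 + x²) < Q`. Hence `g` is strictly decreasing, and as `g → 0` at `+∞`, `g > 0`.
The Mills bound follows the same pattern: `Q - x f / (1 + x²)` has derivative
`-2 f / (1 + x²)²` and tends to `0`. -/

open Filter Topology ProbabilityTheory

theorem lt_of_hasDerivAt_neg_of_tendsto_atTop {g g' : ℝ → ℝ} {a : ℝ}
    (hg : ∀ x, HasDerivAt g (g' x) x) (hg' : ∀ x, g' x < 0) (hlim : Tendsto g atTop (𝓝 a))
    (x : ℝ) : a < g x :=
  have hanti := strictAnti_of_hasDerivAt_neg hg hg'
  (hanti.antitone.le_of_tendsto hlim (x + 1)).trans_lt (hanti (lt_add_one x))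

section TailIntegral

variable {E : Type*} [NormedAddCommGroup E] [NormedSpace ℝ E] {f : ℝ → E}

theorem integral_Ici_eq_integral_Ioi_sub_intervalIntegral (hf : Integrable f) (a x : ℝ) :
    ∫ t in Ici x, f t = (∫ t in Ioi a, f t) - ∫ t in a..x, f t := by
  rw [integral_Ici_eq_integral_Ioi]
  exact eq_sub_of_add_eq'
    (intervalIntegral.integral_interval_add_Ioi hf.integrableOn hf.integrableOn)

theorem hasDerivAt_integral_Ici [CompleteSpace E] (hf : Integrable f) {x : ℝ}
    (hx : ContinuousAt f x) :
    HasDerivAt (fun y => ∫ t in Ici y, f t) (-f x) x := by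
  simp_rw [integral_Ici_eq_integral_Ioi_sub_intervalIntegral hf 0]
  exact (intervalIntegral.integral_hasDerivAt_right hf.intervalIntegrable
    hf.aestronglyMeasurable.stronglyMeasurableAtFilter hx).const_sub _

theorem tendsto_integral_Ici_atTop [CompleteSpace E] (hf : Integrable f) :
    Tendsto (fun y => ∫ t in Ici y, f t) atTop (𝓝 0) := by
  simp_rw [integral_Ici_eq_integral_Ioi_sub_intervalIntegral hf 0]
  simpa using (intervalIntegral_tendsto_integral_Ioi 0 hf.integrableOn tendsto_id).const_sub
    (∫ t in Ioi 0, f t)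

end TailIntegral

theorem stdNormalPdf_eq_gaussianPDFReal : stdNormalPdf = gaussianPDFReal 0 1 := by
  ext x
  simp [stdNormalPdf, gaussianPDFReal]

theorem stdNormalPdf_pos (x : ℝ) : 0 < stdNormalPdf x := by
  rw [stdNormalPdf_eq_gaussianPDFReal]
  exact gaussianPDFReal_pos 0 1 x one_ne_zero

theorem integrable_stdNormalPdf : Integrable stdNormalPdf := by
  rw [stdNormalPdf_eq_gaussianPDFReal]
  exact integrable_gaussianPDFReal 0 1

theorem continuous_stdNormalPdf : Continuous stdNormalPdf := by
  unfold stdNormalPdf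
  fun_prop

theorem hasDerivAt_stdNormalPdf (x : ℝ) :
    HasDerivAt stdNormalPdf (-x * stdNormalPdf x) x := by
  have hexp : HasDerivAt (fun y : ℝ => -y ^ 2 / 2) (-x) x :=
    ((hasDerivAt_pow 2 x).fun_neg.div_const 2).congr_deriv (by ring)
  exact (hexp.exp.const_mul (√(2 * π))⁻¹).congr_deriv (by unfold stdNormalPdf; ring)

theorem tendsto_pow_mul_stdNormalPdf_atTop (n : ℕ) :
    Tendsto (fun x => x ^ n * stdNormalPdf x) atTop (𝓝 0) := by
  have h := ((tendsto_rpow_abs_mul_exp_neg_mul_sq_cocompact one_half_pos n).mono_left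
    atTop_le_cocompact).const_mul (√(2 * π))⁻¹
  rw [mul_zero] at h
  refine h.congr' ?_
  filter_upwards [eventually_ge_atTop 0] with x hx
  rw [abs_of_nonneg hx, rpow_natCast, stdNormalPdf]
  ring_nf

theorem hasDerivAt_gaussQ (x : ℝ) : HasDerivAt gaussQ (-stdNormalPdf x) x :=
  hasDerivAt_integral_Ici integrable_stdNormalPdf continuous_stdNormalPdf.continuousAt

theorem tendsto_gaussQ_atTop : Tendsto gaussQ atTop (𝓝 0) :=
  tendsto_integral_Ici_atTop integrable_stdNormalPdf

theorem tendsto_stdNormalPdf_atTop : Tendsto stdNormalPdf atTop (𝓝 0) := by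
  simpa using tendsto_pow_mul_stdNormalPdf_atTop 0

theorem mul_stdNormalPdf_div_lt_gaussQ (x : ℝ) :
    x * stdNormalPdf x / (1 + x ^ 2) < gaussQ x := by
  rw [← sub_pos]
  refine lt_of_hasDerivAt_neg_of_tendsto_atTop (fun y => ?_) (fun y => ?_) ?_ x
    (g := fun y => gaussQ y - y * stdNormalPdf y / (1 + y ^ 2))
    (g' := fun y => -2 * stdNormalPdf y / (1 + y ^ 2) ^ 2)
  · have hden : 1 + y ^ 2 ≠ 0 := by positivity
    have hquot := (((hasDerivAt_id' y).fun_mul (hasDerivAt_stdNormalPdf y)).fun_div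
      ((hasDerivAt_pow 2 y).const_add 1) hden)
    refine ((hasDerivAt_gaussQ y).sub hquot).congr_deriv ?_
    field_simp
    ring
  · have := stdNormalPdf_pos y
    rw [neg_mul, neg_div, neg_lt_zero]
    positivity
  · have hquot : Tendsto (fun y => y * stdNormalPdf y / (1 + y ^ 2)) atTop (𝓝 0) := by
      refine ((tendsto_pow_mul_stdNormalPdf_atTop 1).div_atTop ?_).congr fun y => by rw [pow_one]
      exact tendsto_atTop_add_const_left _ 1 (tendsto_pow_atTop two_ne_zero)
    simpa using tendsto_gaussQ_atTop.sub hquot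

theorem stmt19 (x : ℝ) :
    x * stdNormalPdf x * gaussQ x + gaussQ x ^ 2 - stdNormalPdf x ^ 2 > 0 := by
  refine lt_of_hasDerivAt_neg_of_tendsto_atTop (fun y => ?_) (fun y => ?_) ?_ x
    (g := fun y => y * stdNormalPdf y * gaussQ y + gaussQ y ^ 2 - stdNormalPdf y ^ 2)
    (g' := fun y => -(stdNormalPdf y * ((1 + y ^ 2) * gaussQ y - y * stdNormalPdf y)))
  · have hf := hasDerivAt_stdNormalPdf y
    have hQ := hasDerivAt_gaussQ y
    refine ((((hasDerivAt_id' y).fun_mul hf).fun_mul hQ).fun_add (hQ.fun_pow 2) |>.fun_sub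
      (hf.fun_pow 2)).congr_deriv ?_
    ring
  · have hmills := (div_lt_iff₀ (by positivity)).1 (mul_stdNormalPdf_div_lt_gaussQ y)
    have := stdNormalPdf_pos y
    rw [neg_lt_zero]
    exact mul_pos this (by linarith)
  · have hprod := ((tendsto_pow_mul_stdNormalPdf_atTop 1).mul tendsto_gaussQ_atTop).add
      (tendsto_gaussQ_atTop.pow 2) |>.sub (tendsto_stdNormalPdf_atTop.pow 2)
    simpa using hprod
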